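/- Let I = ⟨Σ,T,ψ⟩ be a 3DT-instance of span n and π a permutation of {0,…,n} with I ∼ π. If there is a 3DT-step I →(a,b,c) I′ (for some well-ordered triple (a,b,c) ∈ T), then I′ ∼ π∘τ, where τ = τ[a,b,c,ψ]. -/

import Mathlib

/- ----------------------------------------------------------------------
  Common definitions for the formalization of
  "Sorting by Transpositions is Difficult" (Bulteau, Fertin, Rusu).

  Permutations of {0,…,n} are represented as functions ℕ → ℕ that are
  bijections of the set {0,…,n} (everything above n is irrelevant /
  fixed).
---------------------------------------------------------------------- -/

set_option autoImplicit false

/-- The transposition `τ_{i,j,k}`, as a function on `ℕ`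
(for `0 < i < j < k ≤ n` it is a permutation of `{0,…,n}`,
fixing everything `≥ k`). Here `q = k + i - j`. -/
def tau (i j k x : ℕ) : ℕ :=
  if x < i then x
  else if x < k + i - j then x + j - i
  else if x < k then x + j - k
  else x

/-- The inverse transposition `τ_{i,j,k}⁻¹ = τ_{i,k+i-j,k}`. -/
def tauInv (i j k x : ℕ) : ℕ := tau i (k + i - j) k x

def min3 (p q r : ℕ) : ℕ := min p (min q r)

def max3 (p q r : ℕ) : ℕ := max p (max q r)

/-- the middle value of three (pairwise distinct) values -/
def mid3 (p q r : ℕ) : ℕ := p + q + r - min3 p q r - max3 p q r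

/-- The triple of positions `(p,q,r)` is *well-ordered*:
one of `p<q<r`, `q<r<p`, `r<p<q` holds. -/
def WellOrdered3 (p q r : ℕ) : Prop :=
  (p < q ∧ q < r) ∨ (q < r ∧ r < p) ∨ (r < p ∧ p < q)

/-- The transposition `τ[a,b,c,ψ]` associated with a (well-ordered) triple
whose `ψ`-positions are `(p,q,r)`: it is `τ_{i,j,k}` for `(i,j,k)` the
sorted sequence of `(p,q,r)`. -/
def tauStep (p q r x : ℕ) : ℕ := tau (min3 p q r) (mid3 p q r) (max3 p q r) x

/-- the inverse of `τ[a,b,c,ψ]` -/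
def tauInvStep (p q r x : ℕ) : ℕ := tauInv (min3 p q r) (mid3 p q r) (max3 p q r) x

/-- the number of breakpoints `d_b(π)` of `π` as a permutation of `{0,…,n}`:
the number of `x ∈ {1,…,n}` such that `(x-1,x)` is not an adjacency,
i.e. `π x ≠ π (x-1) + 1`. -/
def db (n : ℕ) (π : ℕ → ℕ) : ℕ :=
  ((Finset.Icc 1 n).filter fun x => π x ≠ π (x - 1) + 1).card

/-- a triple `(i,j,k)` of integers coding a transposition of `{0,…,n}` -/
def IsTransp (n : ℕ) (t : ℕ × ℕ × ℕ) : Prop :=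
  0 < t.1 ∧ t.1 < t.2.1 ∧ t.2.1 < t.2.2 ∧ t.2.2 ≤ n

/-- `π` can be sorted by `m` transpositions:
there are transpositions `τ_1,…,τ_m` with `π ∘ τ_m ∘ ⋯ ∘ τ_1 = Id` on `{0,…,n}`.
(`d_t(π)` is the least such `m`.) -/
def SortsIn (n : ℕ) (π : ℕ → ℕ) (m : ℕ) : Prop :=
  ∃ L : List (ℕ × ℕ × ℕ), L.length = m ∧ (∀ t ∈ L, IsTransp n t) ∧
    ∀ x ≤ n, π (L.foldl (fun y t => tau t.1 t.2.1 t.2.2 y) x) = x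

/-- the three elements of an ordered triple, as a finite set -/
def trElems {α : Type*} [DecidableEq α] (t : α × α × α) : Finset α := {t.1, t.2.1, t.2.2}

/-- A 3DT-instance `I = ⟨Σ, T, ψ⟩` of span `n`: an alphabet `Sig`,
a set `T` of ordered triples partitioning `Sig`, and an injection
`ψ : Sig → {1,…,n}`. -/
structure TDT (α : Type*) [DecidableEq α] (n : ℕ) where
  Sig : Finset α
  T : Finset (α × α × α)
  psi : α → ℕ
  mem_T : ∀ t ∈ T, t.1 ∈ Sig ∧ t.2.1 ∈ Sig ∧ t.2.2 ∈ Sig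
  cover : ∀ σ ∈ Sig, ∃ t ∈ T, σ ∈ trElems t
  nodup_T : ∀ t ∈ T, t.1 ≠ t.2.1 ∧ t.1 ≠ t.2.2 ∧ t.2.1 ≠ t.2.2
  disj_T : ∀ t ∈ T, ∀ t' ∈ T, t ≠ t' → Disjoint (trElems t) (trElems t')
  psi_mem : ∀ σ ∈ Sig, psi σ ∈ Finset.Icc 1 n
  psi_inj : Set.InjOn psi ↑Sig

namespace TDT

variable {α : Type*} [DecidableEq α] {n : ℕ}

/-- the domain `L = ψ(Σ)` of a 3DT-instance -/
def dom (I : TDT α n) : Finset ℕ := I.Sig.image I.psi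

/-- a triple of `T` is well-ordered -/
def WellOrderedT (I : TDT α n) (t : α × α × α) : Prop :=
  WellOrdered3 (I.psi t.1) (I.psi t.2.1) (I.psi t.2.2)

/-- the transposition `τ[a,b,c,ψ]` associated with a well-ordered triple -/
def tauOf (I : TDT α n) (t : α × α × α) (x : ℕ) : ℕ :=
  tauStep (I.psi t.1) (I.psi t.2.1) (I.psi t.2.2) x

/-- the inverse of `τ[a,b,c,ψ]` -/
def tauOfInv (I : TDT α n) (t : α × α × α) (x : ℕ) : ℕ :=
  tauInvStep (I.psi t.1) (I.psi t.2.1) (I.psi t.2.2) x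

end TDT

/-- a *variable*: a pair of triples `[(a,b,c),(x,y,z)]` -/
abbrev Var (α : Type*) : Type _ := (α × α × α) × (α × α × α)

section Main

variable {α : Type*} [DecidableEq α]

/-- The 3DT-step `I →(a,b,c) I'` (only defined when `(a,b,c)` is a
well-ordered triple of `T`): the triple is removed and `ψ` is composed
with `τ[a,b,c,ψ]⁻¹`. -/
def StepT {n : ℕ} (t : α × α × α) (I I' : TDT α n) : Prop :=
  t ∈ I.T ∧ I.WellOrderedT t ∧
  I'.Sig = I.Sig \ trElems t ∧
  I'.T = I.T.erase t ∧
  ∀ σ ∈ I'.Sig, I'.psi σ = I.tauOfInv t (I.psi σ)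

/-- `I` is 3DT-collapsible: some sequence of 3DT-steps reduces it to the
empty instance. -/
def Collapsible {n : ℕ} (I : TDT α n) : Prop :=
  ∃ J : TDT α n,
    Relation.ReflTransGen (fun X Y => ∃ t, StepT t X Y) I J ∧ J.Sig = ∅ ∧ J.T = ∅

/-- `I ∼ π` : the 3DT-instance `I` (of span `n`) and the permutation `π` of
`{0,…,n}` are equivalent: `π 0 = 0`, `π v = π (v-1) + 1` for `v ∉ L`, and
`π v = π (succ_I⁻¹ v - 1) + 1` for `v ∈ L` (expressed triple by triple). -/
def EquivPerm {n : ℕ} (I : TDT α n) (π : ℕ → ℕ) : Prop :=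
  π 0 = 0 ∧
  (∀ v, 1 ≤ v → v ≤ n → v ∉ I.dom → π v = π (v - 1) + 1) ∧
  ∀ t ∈ I.T,
    π (I.psi t.2.1) = π (I.psi t.1 - 1) + 1 ∧
    π (I.psi t.2.2) = π (I.psi t.2.1 - 1) + 1 ∧
    π (I.psi t.1) = π (I.psi t.2.2 - 1) + 1

/-- `(s 1, …, s l)` is an `l`-block-decomposition of span `n` -/
def IsBlockDec (n l : ℕ) (s : ℕ → ℕ) : Prop :=
  s 1 = 0 ∧ (∀ h, 1 ≤ h → h < l → s h < s (h + 1)) ∧ s l < n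

/-- `t_h`: the right end of block `h` (`t_h = s_{h+1}` for `h < l`, `t_l = n`) -/
def tEnd (n l : ℕ) (s : ℕ → ℕ) (h : ℕ) : ℕ := if h = l then n else s (h + 1)

/-- position `p` lies in block `h`, i.e. `p ∈ {s_h + 1, …, t_h}` -/
def InBlock (n l : ℕ) (s : ℕ → ℕ) (h p : ℕ) : Prop := s h < p ∧ p ≤ tEnd n l s h

/-- a triple of `T` is *internal* (all three elements in one block) -/
def InternalT (n l : ℕ) (I : TDT α n) (s : ℕ → ℕ) (t : α × α × α) : Prop :=
  ∃ h, 1 ≤ h ∧ h ≤ l ∧ InBlock n l s h (I.psi t.1) ∧ InBlock n l s h (I.psi t.2.1) ∧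
    InBlock n l s h (I.psi t.2.2)

/-- block conditions (C2)–(C3) of a variable `[(a,b,c),(x,y,z)]`:
`b,x,y` lie in the source block `h0` and `a,c,z` lie in the target block
`h1 ≠ h0`. -/
def VarBlocksAt (n l : ℕ) (I : TDT α n) (s : ℕ → ℕ) (h0 h1 : ℕ) (a b c x y z : α) : Prop :=
  (a, b, c) ∈ I.T ∧ (x, y, z) ∈ I.T ∧
  1 ≤ h0 ∧ h0 ≤ l ∧ 1 ≤ h1 ∧ h1 ≤ l ∧ h1 ≠ h0 ∧
  InBlock n l s h0 (I.psi b) ∧ InBlock n l s h0 (I.psi x) ∧ InBlock n l s h0 (I.psi y) ∧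
  InBlock n l s h1 (I.psi a) ∧ InBlock n l s h1 (I.psi c) ∧ InBlock n l s h1 (I.psi z)

/-- the variable `[(a,b,c),(x,y,z)]` is *valid*, with source `h0` and target `h1`:
conditions (C2)–(C5). -/
def ValidVarAt (n l : ℕ) (I : TDT α n) (s : ℕ → ℕ) (h0 h1 : ℕ) (a b c x y z : α) : Prop :=
  VarBlocksAt n l I s h0 h1 a b c x y z ∧
  (I.psi x < I.psi y →
    I.psi x < I.psi b ∧ I.psi b < I.psi y ∧
      ∀ σ ∈ I.Sig, I.psi x < I.psi σ → I.psi σ < I.psi y → σ = b) ∧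
  I.psi a < I.psi z ∧ I.psi z < I.psi c

/-- the variable `[(a,b,c),(x,y,z)]` is valid in the block decomposition `s` -/
def ValidVar (n l : ℕ) (I : TDT α n) (s : ℕ → ℕ) (a b c x y z : α) : Prop :=
  ∃ h0 h1, ValidVarAt n l I s h0 h1 a b c x y z

/-- validity of a variable given as a pair of triples -/
def ValidVarV (n l : ℕ) (I : TDT α n) (s : ℕ → ℕ) (V : Var α) : Prop :=
  ValidVar n l I s V.1.1 V.1.2.1 V.1.2.2 V.2.1 V.2.2.1 V.2.2.2

/-- conditions (C2)–(C3) only, of a variable given as a pair of triples -/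
def VarC23V (n l : ℕ) (I : TDT α n) (s : ℕ → ℕ) (V : Var α) : Prop :=
  ∃ h0 h1, VarBlocksAt n l I s h0 h1 V.1.1 V.1.2.1 V.1.2.2 V.2.1 V.2.2.1 V.2.2.2

/-- the external triples of `(I,s)` are partitioned into the set `𝒜` of
variables, each satisfying the property `P`. -/
def PartitionIntoVars (n l : ℕ) (I : TDT α n) (s : ℕ → ℕ) (P : Var α → Prop)
    (𝒜 : Finset (Var α)) : Prop :=
  (∀ V ∈ 𝒜, P V) ∧
  (∀ V ∈ 𝒜, V.1 ≠ V.2) ∧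
  (∀ V ∈ 𝒜, ∀ W ∈ 𝒜, V ≠ W → V.1 ≠ W.1 ∧ V.1 ≠ W.2 ∧ V.2 ≠ W.1 ∧ V.2 ≠ W.2) ∧
  (∀ V ∈ 𝒜, ¬ InternalT n l I s V.1 ∧ ¬ InternalT n l I s V.2) ∧
  ∀ t ∈ I.T, ¬ InternalT n l I s t → ∃ V ∈ 𝒜, t = V.1 ∨ t = V.2

/-- `(I,s)` is a *valid context* -/
def ValidContext (n l : ℕ) (I : TDT α n) (s : ℕ → ℕ) : Prop :=
  IsBlockDec n l s ∧ ∃ 𝒜, PartitionIntoVars n l I s (ValidVarV n l I s) 𝒜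

/-- a 3DT-step on an instance together with an `l`-block-decomposition:
`(I,B) →(t) (I',B')` with `B' = τ⁻¹[B]`. -/
def StepB (n l : ℕ) (t : α × α × α) (P P' : TDT α n × (ℕ → ℕ)) : Prop :=
  StepT t P.1 P'.1 ∧ IsBlockDec n l P'.2 ∧
  ∀ h, 1 ≤ h → h ≤ l → P'.2 h = P.1.tauOfInv t (P.2 h)

/-- From the state `st`, the triple `v` (of some variable) can be activated,
possibly after some 3DT-steps using only the internal triples in `ints`. -/
def CanActivate (n l : ℕ) (ints : Set (α × α × α)) (v : α × α × α)
    (st : TDT α n × (ℕ → ℕ)) : Prop :=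
  ∃ (m : ℕ) (c : ℕ → TDT α n × (ℕ → ℕ)) (tr : ℕ → α × α × α),
    c 0 = st ∧ (∀ p ≤ m, StepB n l (tr p) (c p) (c (p + 1))) ∧
    (∀ p < m, tr p ∈ ints) ∧ tr m = v

/-- the block `h` of `(I,s)` reads (in increasing `ψ`-order) exactly as the
word `w`. -/
def BlockWord (n l : ℕ) (I : TDT α n) (s : ℕ → ℕ) (h : ℕ) (w : List α) : Prop :=
  w.Chain' (fun u v => I.psi u < I.psi v) ∧
  (∀ σ ∈ w, σ ∈ I.Sig ∧ InBlock n l s h (I.psi σ)) ∧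
  ∀ σ ∈ I.Sig, InBlock n l s h (I.psi σ) → σ ∈ w

/-- the block `h` is the block `[A1,A2] = copy(A)`,
with word `a y1 e z d y2 x1 b1 c x2 b2 f`. -/
def IsCopyBlock (n l : ℕ) (I : TDT α n) (s : ℕ → ℕ) (h : ℕ) (A A1 A2 : Var α)
    (d e f : α) : Prop :=
  (d, e, f) ∈ I.T ∧
  BlockWord n l I s h
    [A.1.1, A1.2.2.1, e, A.2.2.2, d, A2.2.2.1, A1.2.1, A1.1.2.1, A.1.2.2, A2.2.1, A2.1.2.1, f]

/-- the block `h` is the block `A = and(A1,A2)`,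
with word `a1 e z1 a2 c1 z2 d y c2 x b f`. -/
def IsAndBlock (n l : ℕ) (I : TDT α n) (s : ℕ → ℕ) (h : ℕ) (A1 A2 A : Var α)
    (d e f : α) : Prop :=
  (d, e, f) ∈ I.T ∧
  BlockWord n l I s h
    [A1.1.1, e, A1.2.2.2, A2.1.1, A1.1.2.2, A2.2.2.2, d, A.2.2.1, A2.1.2.2, A.2.1, A.1.2.1, f]

/-- the block `h` is the block `A = or(A1,A2)`,
with word `a1 b' z1 a2 d y a' x b f z2 c1 e c' c2`. -/
def IsOrBlock (n l : ℕ) (I : TDT α n) (s : ℕ → ℕ) (h : ℕ) (A1 A2 A : Var α)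
    (a' b' c' d e f : α) : Prop :=
  (a', b', c') ∈ I.T ∧ (d, e, f) ∈ I.T ∧
  BlockWord n l I s h
    [A1.1.1, b', A1.2.2.2, A2.1.1, d, A.2.2.1, a', A.2.1, A.1.2.1, f, A2.2.2.2, A1.1.2.2, e,
      c', A2.1.2.2]

/-- the block `h` is the block `[A1,A2] = var(A)`,
with word `d1 y1 a d2 y2 e1 a' e2 x1 b1 f1 c' z b' c x2 b2 f2`. -/
def IsVarBlock (n l : ℕ) (I : TDT α n) (s : ℕ → ℕ) (h : ℕ) (A A1 A2 : Var α)
    (d1 e1 f1 d2 e2 f2 a' b' c' : α) : Prop :=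
  (d1, e1, f1) ∈ I.T ∧ (d2, e2, f2) ∈ I.T ∧ (a', b', c') ∈ I.T ∧
  BlockWord n l I s h
    [d1, A1.2.2.1, A.1.1, d2, A2.2.2.1, e1, a', e2, A1.2.1, A1.1.2.1, f1, c', A.2.2.2, b',
      A.1.2.2, A2.2.1, A2.1.2.1, f2]

/-- `(I,s)` is an *assembling of basic blocks* over the set `𝒜` of variables:
the word representation of `I` is a concatenation of `l` blocks, each of one
of the four kinds `copy`, `and`, `or`, `var`; each variable is the input of
exactly one block and the output of exactly one other block, and `T`
consists of the internal triples of the blocks together with the triples of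
the variables. -/
def IsAssembling (n l : ℕ) (I : TDT α n) (s : ℕ → ℕ) (𝒜 : Finset (Var α)) : Prop :=
  IsBlockDec n l s ∧
  (∀ V ∈ 𝒜, V.1 ∈ I.T ∧ V.2 ∈ I.T ∧ V.1 ≠ V.2) ∧
  (∀ V ∈ 𝒜, ∀ W ∈ 𝒜, V ≠ W → V.1 ≠ W.1 ∧ V.1 ≠ W.2 ∧ V.2 ≠ W.1 ∧ V.2 ≠ W.2) ∧
  (∀ V ∈ 𝒜, ∃ h0 h1, VarBlocksAt n l I s h0 h1 V.1.1 V.1.2.1 V.1.2.2 V.2.1 V.2.2.1 V.2.2.2) ∧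
  (∀ t ∈ I.T, InternalT n l I s t ∨ ∃ V ∈ 𝒜, t = V.1 ∨ t = V.2) ∧
  ∀ h, 1 ≤ h → h ≤ l →
    (∃ A ∈ 𝒜, ∃ A1 ∈ 𝒜, ∃ A2 ∈ 𝒜, ∃ d e f : α, IsCopyBlock n l I s h A A1 A2 d e f) ∨
    (∃ A ∈ 𝒜, ∃ A1 ∈ 𝒜, ∃ A2 ∈ 𝒜, ∃ d e f : α, IsAndBlock n l I s h A1 A2 A d e f) ∨
    (∃ A ∈ 𝒜, ∃ A1 ∈ 𝒜, ∃ A2 ∈ 𝒜, ∃ a' b' c' d e f : α,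
      IsOrBlock n l I s h A1 A2 A a' b' c' d e f) ∨
    (∃ A ∈ 𝒜, ∃ A1 ∈ 𝒜, ∃ A2 ∈ 𝒜, ∃ d1 e1 f1 d2 e2 f2 a' b' c' : α,
      IsVarBlock n l I s h A A1 A2 d1 e1 f1 d2 e2 f2 a' b' c')

end Main

/-- satisfiability of a boolean formula in CNF (clauses are lists of
literals; a literal is a pair (variable index, sign)) -/
def CNFSat (m : ℕ) (φ : List (List (Fin m × Bool))) : Prop :=
  ∃ v : Fin m → Bool, ∀ C ∈ φ, ∃ p ∈ C, v p.1 = p.2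

/-! The transposition `τ = τ_{i,j,k}` (with `i < j < k` the sorted positions of the removed triple)
sends every pair `(v - 1, v)` to a pair `(τ v - 1, τ v)` of consecutive positions, except at its
three cut points `i`, `k + i - j`, `k`, whose images `(i - 1, j)`, `(k - 1, i)`, `(j - 1, k)` are
exactly the successor conditions of the removed triple, read from its smallest position. Every
position surviving in `I'` is sent back by `τ` to its position in `I`, together with its
predecessor, so the conditions of `I ∼ π` turn into those of `I' ∼ π ∘ τ`; a position outside the
domain of `I'` that is not a cut point is sent outside the domain of `I`. -/

section Transposition

variable {i j k : ℕ}

theorem tau_zero (hi : 0 < i) : tau i j k 0 = 0 := by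
  simp [tau, hi]

theorem tau_tauInv (hij : i < j) (hjk : j < k) (x : ℕ) : tau i j k (tauInv i j k x) = x := by
  unfold tauInv tau; split_ifs <;> omega

theorem tauInv_tau (hij : i < j) (hjk : j < k) (x : ℕ) : tauInv i j k (tau i j k x) = x := by
  unfold tauInv tau; split_ifs <;> omega

theorem tau_le {n x : ℕ} (hjk : j < k) (hkn : k ≤ n) (hx : x ≤ n) : tau i j k x ≤ n := by
  unfold tau; split_ifs <;> omega

theorem one_le_tau {x : ℕ} (hi : 0 < i) (hij : i < j) (hx : 1 ≤ x) : 1 ≤ tau i j k x := by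
  unfold tau; split_ifs <;> omega

/- `i`, `k + i - j` and `k` are the cut points of `τ_{i,j,k}`: elsewhere the pair `(v - 1, v)` is
sent to `(τ v - 1, τ v)` (`tau_sub_one`), while at the cut points it is sent to `(i - 1, j)`,
`(k - 1, i)` and `(j - 1, k)`. -/
theorem tau_cut_left (hi : 0 < i) (hjk : j < k) :
    tau i j k i = j ∧ tau i j k (i - 1) = i - 1 := by
  unfold tau; constructor <;> split_ifs <;> omega

theorem tau_cut_mid (hij : i < j) (hjk : j < k) :
    tau i j k (k + i - j) = i ∧ tau i j k (k + i - j - 1) = k - 1 := by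
  unfold tau; constructor <;> split_ifs <;> omega

theorem tau_cut_right (hij : i < j) (hjk : j < k) :
    tau i j k k = k ∧ tau i j k (k - 1) = j - 1 := by
  unfold tau; constructor <;> split_ifs <;> omega

theorem tau_sub_one {x : ℕ} (hxi : x ≠ i) (hxq : x ≠ k + i - j) (hxk : x ≠ k) :
    tau i j k (x - 1) = tau i j k x - 1 := by
  unfold tau; split_ifs <;> omega

theorem tau_ne_of_ne_cut {x : ℕ} (hij : i < j) (hjk : j < k)
    (hxi : x ≠ i) (hxq : x ≠ k + i - j) (hxk : x ≠ k) :
    tau i j k x ≠ i ∧ tau i j k x ≠ j ∧ tau i j k x ≠ k := by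
  unfold tau; split_ifs <;> omega

theorem tau_tauInv_sub_one {x : ℕ} (hij : i < j) (hjk : j < k)
    (hxi : x ≠ i) (hxj : x ≠ j) (hxk : x ≠ k) :
    tau i j k (tauInv i j k x - 1) = x - 1 := by
  unfold tauInv tau; split_ifs <;> omega

end Transposition

namespace WellOrdered3

variable {p q r : ℕ}

theorem sorted_cases (h : WellOrdered3 p q r) :
    (min3 p q r = p ∧ mid3 p q r = q ∧ max3 p q r = r) ∨
    (min3 p q r = q ∧ mid3 p q r = r ∧ max3 p q r = p) ∨
    (min3 p q r = r ∧ mid3 p q r = p ∧ max3 p q r = q) := by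
  unfold WellOrdered3 at h; unfold mid3 min3 max3; omega

theorem min3_lt_mid3 (h : WellOrdered3 p q r) : min3 p q r < mid3 p q r := by
  unfold WellOrdered3 at h; unfold mid3 min3 max3; omega

theorem mid3_lt_max3 (h : WellOrdered3 p q r) : mid3 p q r < max3 p q r := by
  unfold WellOrdered3 at h; unfold mid3 min3 max3; omega

theorem ne_sorted_iff (h : WellOrdered3 p q r) {x : ℕ} :
    x ≠ p ∧ x ≠ q ∧ x ≠ r ↔ x ≠ min3 p q r ∧ x ≠ mid3 p q r ∧ x ≠ max3 p q r := by
  rcases h.sorted_cases with ⟨h1, h2, h3⟩ | ⟨h1, h2, h3⟩ | ⟨h1, h2, h3⟩ <;> rw [h1, h2, h3] <;>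
    tauto

theorem rotate {R : ℕ → ℕ → Prop} (h : WellOrdered3 p q r) (hpq : R p q) (hqr : R q r)
    (hrp : R r p) :
    R (min3 p q r) (mid3 p q r) ∧ R (mid3 p q r) (max3 p q r) ∧ R (max3 p q r) (min3 p q r) := by
  rcases h.sorted_cases with ⟨h1, h2, h3⟩ | ⟨h1, h2, h3⟩ | ⟨h1, h2, h3⟩ <;> rw [h1, h2, h3] <;>
    exact ⟨‹_›, ‹_›, ‹_›⟩

end WellOrdered3

section Relabel

variable {α : Type*} [DecidableEq α] {n : ℕ}

theorem StepT.mem_sig_iff {t : α × α × α} {I I' : TDT α n} (h : StepT t I I') {σ : α} :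
    σ ∈ I'.Sig ↔
      σ ∈ I.Sig ∧ I.psi σ ≠ I.psi t.1 ∧ I.psi σ ≠ I.psi t.2.1 ∧ I.psi σ ≠ I.psi t.2.2 := by
  obtain ⟨ht, -, hSig, -⟩ := h
  obtain ⟨ha, hb, hc⟩ := I.mem_T t ht
  rw [hSig, Finset.mem_sdiff]
  simp only [trElems, Finset.mem_insert, Finset.mem_singleton, not_or]
  refine and_congr_right fun hσ => ⟨?_, ?_⟩
  · rintro ⟨h1, h2, h3⟩
    exact ⟨fun e => h1 (I.psi_inj hσ ha e), fun e => h2 (I.psi_inj hσ hb e),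
      fun e => h3 (I.psi_inj hσ hc e)⟩
  · rintro ⟨h1, h2, h3⟩
    exact ⟨fun e => h1 (e ▸ rfl), fun e => h2 (e ▸ rfl), fun e => h3 (e ▸ rfl)⟩

variable {I I' : TDT α n} {i j k : ℕ}

theorem tau_notMem_dom (hij : i < j) (hjk : j < k)
    (hSig : ∀ σ, σ ∈ I'.Sig ↔ σ ∈ I.Sig ∧ I.psi σ ≠ i ∧ I.psi σ ≠ j ∧ I.psi σ ≠ k)
    (hpsi : ∀ σ ∈ I'.Sig, I'.psi σ = tauInv i j k (I.psi σ)) {v : ℕ} (hv : v ∉ I'.dom)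
    (hvi : tau i j k v ≠ i) (hvj : tau i j k v ≠ j) (hvk : tau i j k v ≠ k) :
    tau i j k v ∉ I.dom := by
  intro hd
  obtain ⟨σ, hσ, hσv⟩ := Finset.mem_image.1 hd
  have hσ' : σ ∈ I'.Sig := (hSig σ).2 ⟨hσ, hσv ▸ hvi, hσv ▸ hvj, hσv ▸ hvk⟩
  exact hv (Finset.mem_image.2 ⟨σ, hσ', by rw [hpsi σ hσ', hσv, tauInv_tau hij hjk]⟩)

theorem EquivPerm.comp_tau {π : ℕ → ℕ} (hi : 0 < i) (hij : i < j) (hjk : j < k) (hkn : k ≤ n)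
    (hπ : EquivPerm I π)
    (hcut : π j = π (i - 1) + 1 ∧ π k = π (j - 1) + 1 ∧ π i = π (k - 1) + 1)
    (hT : I'.T ⊆ I.T)
    (hSig : ∀ σ, σ ∈ I'.Sig ↔ σ ∈ I.Sig ∧ I.psi σ ≠ i ∧ I.psi σ ≠ j ∧ I.psi σ ≠ k)
    (hpsi : ∀ σ ∈ I'.Sig, I'.psi σ = tauInv i j k (I.psi σ)) :
    EquivPerm I' (fun v => π (tau i j k v)) := by
  obtain ⟨h0, hoff, htr⟩ := hπ
  obtain ⟨hπj, hπk, hπi⟩ := hcut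
  refine ⟨by simp only [tau_zero hi, h0], fun v hv1 hvn hv => ?_, fun t' ht' => ?_⟩
  · show π (tau i j k v) = π (tau i j k (v - 1)) + 1
    by_cases hvi : v = i
    · rw [hvi, (tau_cut_left hi hjk).1, (tau_cut_left hi hjk).2, hπj]
    by_cases hvq : v = k + i - j
    · rw [hvq, (tau_cut_mid hij hjk).1, (tau_cut_mid hij hjk).2, hπi]
    by_cases hvk : v = k
    · rw [hvk, (tau_cut_right hij hjk).1, (tau_cut_right hij hjk).2, hπk]
    obtain ⟨hτi, hτj, hτk⟩ := tau_ne_of_ne_cut hij hjk hvi hvq hvk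
    rw [tau_sub_one hvi hvq hvk]
    exact hoff _ (one_le_tau hi hij hv1) (tau_le hjk hkn hvn)
      (tau_notMem_dom hij hjk hSig hpsi hv hτi hτj hτk)
  · have hback : ∀ σ ∈ I'.Sig,
        tau i j k (I'.psi σ) = I.psi σ ∧ tau i j k (I'.psi σ - 1) = I.psi σ - 1 := by
      intro σ hσ
      obtain ⟨-, hσi, hσj, hσk⟩ := (hSig σ).1 hσ
      rw [hpsi σ hσ]
      exact ⟨tau_tauInv hij hjk _, tau_tauInv_sub_one hij hjk hσi hσj hσk⟩
    obtain ⟨ha, hb, hc⟩ := I'.mem_T t' ht'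
    simp only [(hback _ ha).1, (hback _ ha).2, (hback _ hb).1, (hback _ hb).2, (hback _ hc).1,
      (hback _ hc).2]
    exact htr t' (hT ht')

end Relabel

theorem stmt5_general {α : Type*} [DecidableEq α] {n : ℕ} (I I' : TDT α n)
    (t : α × α × α) (π : ℕ → ℕ)
    (heq : EquivPerm I π)
    (hstep : StepT t I I') :
    EquivPerm I' (fun v => π (I.tauOf t v)) := by
  have hSig := fun σ ↦
    (hstep.mem_sig_iff (σ := σ)).trans (and_congr_right' hstep.2.1.ne_sorted_iff)
  obtain ⟨ht, hwo, -, hT, hpsi⟩ := hstep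
  obtain ⟨ha, hb, hc⟩ := I.mem_T t ht
  have hpa := Finset.mem_Icc.1 (I.psi_mem _ ha)
  have hpb := Finset.mem_Icc.1 (I.psi_mem _ hb)
  have hpc := Finset.mem_Icc.1 (I.psi_mem _ hc)
  have hi : 0 < min3 (I.psi t.1) (I.psi t.2.1) (I.psi t.2.2) := by unfold min3; omega
  have hkn : max3 (I.psi t.1) (I.psi t.2.1) (I.psi t.2.2) ≤ n := by unfold max3; omega
  obtain ⟨hpq, hqr, hrp⟩ := heq.2.2 t ht
  exact heq.comp_tau hi hwo.min3_lt_mid3 hwo.mid3_lt_max3 hkn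
    (hwo.rotate (R := fun x y => π y = π (x - 1) + 1) hpq hqr hrp)
    (hT ▸ Finset.erase_subset t I.T) hSig hpsi

/-- Lemma 1 of the paper.
If `I ∼ π` and there is a 3DT-step `I →(a,b,c) I'`, then
`I' ∼ π ∘ τ` where `τ = τ[a,b,c,ψ]`. -/
theorem stmt5 {α : Type*} [DecidableEq α] {n : ℕ} (I I' : TDT α n)
    (t : α × α × α) (π : ℕ → ℕ)
    (hbij : Set.BijOn π (Set.Icc 0 n) (Set.Icc 0 n))
    (heq : EquivPerm I π)
    (hstep : StepT t I I') :
    EquivPerm I' (fun v => π (I.tauOf t v)) :=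
  stmt5_general I I' t π heq hstep
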